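/- arXiv:2206.07341 — 3 statements merged into one kernel-verified Lean document; each statement's English description precedes it below -/
import Mathlib

section
/- Let R be a finite set of strict pairwise comparisons over subsets of the finite set F and let θ be a finite family of subsets of F. If there exists a certificate λ for θ with respect to R (λ : R → ℝ nonnegative with Σ_{(A,B)∈R} λ(A,B) > 0 and Σ_{(A,B)∈R} λ(A,B)(I_A(S) − I_B(S)) = 0 for every S ∈ θ), then U_R^θ = ∅; that is, R cannot be represented by any θ-additive model. -/
/-- The indicator `I_A(S) = 1` if `S ⊆ A`, else `0`. -/
def ind {α : Type*} [DecidableEq α] (A S : Finset α) : ℝ :=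
  if S ⊆ A then 1 else 0

/-- The θ-additive utility: `f_{θ,u}(A) = Σ_{S ∈ θ} I_A(S) u(S)`. -/
def util {α : Type*} [DecidableEq α] (θ : Finset (Finset α)) (u : Finset α → ℝ)
    (A : Finset α) : ℝ :=
  ∑ S ∈ θ, ind A S * u S

/-- `U_R^θ`: the set of utility parameter functions compatible with every
strict preference in `R`. -/
def compatSet {α : Type*} [DecidableEq α] (R : Finset (Finset α × Finset α))
    (θ : Finset (Finset α)) : Set (Finset α → ℝ) :=
  {u | ∀ p ∈ R, util θ u p.2 < util θ u p.1}

/-- A certificate for `θ` with respect to `R`. -/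
def IsCertificate {α : Type*} [DecidableEq α] (R : Finset (Finset α × Finset α))
    (θ : Finset (Finset α)) (lam : Finset α × Finset α → ℝ) : Prop :=
  (∀ p ∈ R, 0 ≤ lam p) ∧ (0 < ∑ p ∈ R, lam p) ∧
    (∀ S ∈ θ, ∑ p ∈ R, lam p * (ind p.1 S - ind p.2 S) = 0)

/-- If there exists a certificate for `θ` with respect to `R`, then `R` cannot
be represented by any `θ`-additive model: `U_R^θ = ∅`. -/
theorem stmt13 {α : Type*} [Fintype α] [DecidableEq α]
    (R : Finset (Finset α × Finset α)) (θ : Finset (Finset α))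
    (lam : Finset α × Finset α → ℝ) (hcert : IsCertificate R θ lam) :
    compatSet R θ = ∅ := by
  obtain ⟨hnn, hpos, hzero⟩ := hcert
  rw [Set.eq_empty_iff_forall_notMem]
  intro u hu
  -- key sum
  have hkey : ∑ p ∈ R, lam p * (util θ u p.1 - util θ u p.2) = 0 := by
    have : ∑ p ∈ R, lam p * (util θ u p.1 - util θ u p.2)
        = ∑ S ∈ θ, (∑ p ∈ R, lam p * (ind p.1 S - ind p.2 S)) * u S := by
      simp only [util, ← Finset.sum_sub_distrib, Finset.mul_sum, Finset.sum_mul]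
      rw [Finset.sum_comm]
      apply Finset.sum_congr rfl
      intro p _
      apply Finset.sum_congr rfl
      intro S _
      ring
    rw [this]
    apply Finset.sum_eq_zero
    intro S hS
    rw [hzero S hS, zero_mul]
  -- there is p with lam p > 0
  obtain ⟨q, hq, hqpos⟩ : ∃ q ∈ R, 0 < lam q := by
    by_contra h
    push_neg at h
    have : ∑ p ∈ R, lam p ≤ 0 := Finset.sum_nonpos (fun p hp => h p hp)
    linarith
  have hgt : 0 < ∑ p ∈ R, lam p * (util θ u p.1 - util θ u p.2) := by
    apply Finset.sum_pos'
    · intro p hp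
      exact mul_nonneg (hnn p hp) (sub_nonneg.mpr (le_of_lt (hu p hp)))
    · exact ⟨q, hq, mul_pos hqpos (sub_pos.mpr (hu q hq))⟩
  linarith
end

section
/- Let R be a nonempty finite set of strict pairwise comparisons over subsets of the finite set F and let θ be a finite family of subsets of F. If U_R^θ = ∅ (R cannot be represented by a θ-additive model), then there exists a certificate λ for θ with respect to R, i.e., λ : R → ℝ with λ(A,B) ≥ 0 for all (A,B) ∈ R, Σ_{(A,B)∈R} λ(A,B) > 0, and Σ_{(A,B)∈R} λ(A,B)(I_A(S) − I_B(S)) = 0 for every S ∈ θ. -/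
section Gordan

variable {ι E : Type*} [AddCommGroup E] [Module ℝ E] [TopologicalSpace E]
  [IsTopologicalAddGroup E] [ContinuousSMul ℝ E] [LocallyConvexSpace ℝ E] [T1Space E]

theorem exists_mem_stdSimplex_sum_smul_eq_zero [Fintype ι] {v : ι → E}
    (h : ¬∃ f : StrongDual ℝ E, ∀ i, 0 < f (v i)) :
    ∃ w ∈ stdSimplex ℝ ι, ∑ i, w i • v i = 0 := by
  classical
  by_contra! h0
  set L : (ι → ℝ) →ₗ[ℝ] E := Fintype.linearCombination ℝ v
  have hK : IsCompact (L '' stdSimplex ℝ ι) :=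
    (isCompact_stdSimplex ℝ ι).image (LinearMap.continuous_on_pi L)
  have hdisj : Disjoint {(0 : E)} (L '' stdSimplex ℝ ι) := by
    rw [Set.disjoint_singleton_left]
    rintro ⟨w, hw, hLw⟩
    exact h0 w hw (by simpa [L, Fintype.linearCombination_apply] using hLw)
  obtain ⟨f, u, u', hf0, huu', hfK⟩ := geometric_hahn_banach_closed_compact (convex_singleton 0)
    isClosed_singleton ((convex_stdSimplex ℝ ι).linear_image L) hK hdisj
  refine h ⟨f, fun i => ?_⟩
  have hi : v i ∈ L '' stdSimplex ℝ ι := ⟨Pi.single i 1, single_mem_stdSimplex ℝ i, by simp [L]⟩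
  linarith [hf0 0 rfl, hfK _ hi, map_zero f]

theorem Finset.exists_nonneg_sum_eq_one_sum_smul_eq_zero {s : Finset ι} {v : ι → E}
    (h : ¬∃ f : StrongDual ℝ E, ∀ i ∈ s, 0 < f (v i)) :
    ∃ w : ι → ℝ, (∀ i ∈ s, 0 ≤ w i) ∧ ∑ i ∈ s, w i = 1 ∧ ∑ i ∈ s, w i • v i = 0 := by
  classical
  obtain ⟨w, ⟨hw₀, hw₁⟩, hw⟩ := exists_mem_stdSimplex_sum_smul_eq_zero (v := fun i : s => v i)
    fun ⟨f, hf⟩ => h ⟨f, fun i hi => hf ⟨i, hi⟩⟩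
  refine ⟨fun i => if hi : i ∈ s then w ⟨i, hi⟩ else 0, fun i hi => by simp [hi, hw₀], ?_, ?_⟩
  · rw [← hw₁, ← Finset.sum_attach]; simp
  · rw [← hw, ← Finset.sum_attach]; simp

end Gordan

theorem LinearMap.exists_apply_restrict_eq_sum_mul {ι : Type*} (s : Finset ι)
    (f : (s → ℝ) →ₗ[ℝ] ℝ) : ∃ u : ι → ℝ, ∀ g : ι → ℝ, f (s.restrict g) = ∑ i ∈ s, g i * u i := by
  classical
  refine ⟨fun i => if hi : i ∈ s then f (Pi.single ⟨i, hi⟩ 1) else 0, fun g => ?_⟩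
  rw [f.pi_apply_eq_sum_univ, ← Finset.sum_coe_sort s]
  refine Finset.sum_congr rfl fun i _ => ?_
  simp only [Finset.coe_mem, dif_pos, Finset.restrict, smul_eq_mul, Subtype.coe_eta]
  congr 2
  ext j
  simp [Pi.single_apply, eq_comm]

theorem util_sub_util {α : Type*} [DecidableEq α] (θ : Finset (Finset α)) (u : Finset α → ℝ)
    (A B : Finset α) : util θ u A - util θ u B = ∑ S ∈ θ, (ind A S - ind B S) * u S := by
  simp only [util, ← Finset.sum_sub_distrib, sub_mul]

theorem stmt14_general {α : Type*} [DecidableEq α]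
    (R : Finset (Finset α × Finset α))
    (θ : Finset (Finset α)) (hempty : compatSet R θ = ∅) :
    ∃ lam : Finset α × Finset α → ℝ,
      (∀ p ∈ R, 0 ≤ lam p) ∧ (0 < ∑ p ∈ R, lam p) ∧
        (∀ S ∈ θ, ∑ p ∈ R, lam p * (ind p.1 S - ind p.2 S) = 0) := by
  set v : Finset α × Finset α → θ → ℝ := fun p => θ.restrict fun S => ind p.1 S - ind p.2 S
  have hsep : ¬∃ f : StrongDual ℝ (θ → ℝ), ∀ p ∈ R, 0 < f (v p) := by
    rintro ⟨f, hf⟩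
    obtain ⟨u, hu⟩ := (f : (θ → ℝ) →ₗ[ℝ] ℝ).exists_apply_restrict_eq_sum_mul
    have hcompat : u ∈ compatSet R θ := fun p hp => by
      have hfp : f (v p) = util θ u p.1 - util θ u p.2 := by
        rw [util_sub_util, ← hu]; rfl
      linarith [hf p hp]
    simp [hempty] at hcompat
  obtain ⟨w, hw₀, hw₁, hw⟩ := Finset.exists_nonneg_sum_eq_one_sum_smul_eq_zero hsep
  refine ⟨w, hw₀, hw₁ ▸ one_pos, fun S hS => ?_⟩
  simpa [v, Finset.sum_apply] using congrFun hw ⟨S, hS⟩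

/-- If `R` is nonempty and cannot be represented by a `θ`-additive model
(`U_R^θ = ∅`), then there exists a certificate `λ` for `θ` with respect
to `R`. -/
theorem stmt14 {α : Type*} [Fintype α] [DecidableEq α]
    (R : Finset (Finset α × Finset α)) (hR : R.Nonempty)
    (θ : Finset (Finset α)) (hempty : compatSet R θ = ∅) :
    ∃ lam : Finset α × Finset α → ℝ,
      (∀ p ∈ R, 0 ≤ lam p) ∧ (0 < ∑ p ∈ R, lam p) ∧
        (∀ S ∈ θ, ∑ p ∈ R, lam p * (ind p.1 S - ind p.2 S) = 0) :=
  stmt14_general R θ hempty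
end

section
/- Let R be a finite set of strict pairwise comparisons over subsets of the finite set F, let θ̄ = {A : (A,B) ∈ R for some B} ∪ {B : (A,B) ∈ R for some A} be the family of all alternatives appearing in R, and suppose U_R^{θ̄} ≠ ∅. Then for any family θ of subsets of F and any certificate λ for θ with respect to R, there exists T ∈ θ̄ with Σ_{(A,B)∈R} λ(A,B)(I_A(T) − I_B(T)) ≠ 0. (A set breaking the certificate can always be found among the alternatives appearing in R.) -/
/-- `θ̄`: the family of all alternatives appearing in `R`. -/
def thetaBar {α : Type*} [DecidableEq α] (R : Finset (Finset α × Finset α)) :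
    Finset (Finset α) :=
  R.image Prod.fst ∪ R.image Prod.snd

/-- If `R` is representable by a `θ̄`-additive model, then every certificate
for any family `θ` can be broken by some set `T ∈ θ̄`. -/
theorem stmt16 {α : Type*} [Fintype α] [DecidableEq α]
    (R : Finset (Finset α × Finset α))
    (hbar : (compatSet R (thetaBar R)).Nonempty)
    (θ : Finset (Finset α)) (lam : Finset α × Finset α → ℝ)
    (hcert : IsCertificate R θ lam) :
    ∃ T ∈ thetaBar R, ∑ p ∈ R, lam p * (ind p.1 T - ind p.2 T) ≠ 0 := by
  by_contra h
  push_neg at h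
  obtain ⟨u, hu⟩ := hbar
  obtain ⟨hnn, hpos, -⟩ := hcert
  have key : ∑ p ∈ R, lam p * (util (thetaBar R) u p.1 - util (thetaBar R) u p.2) = 0 := by
    have heq : ∀ p ∈ R, lam p * (util (thetaBar R) u p.1 - util (thetaBar R) u p.2)
        = ∑ T ∈ thetaBar R, lam p * (ind p.1 T - ind p.2 T) * u T := by
      intro p hp
      simp only [util, ← Finset.sum_sub_distrib, Finset.mul_sum]
      exact Finset.sum_congr rfl fun T hT => by ring
    rw [Finset.sum_congr rfl heq, Finset.sum_comm]
    refine Finset.sum_eq_zero fun T hT => ?_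
    rw [← Finset.sum_mul, h T hT, zero_mul]
  obtain ⟨q, hq, hqpos⟩ : ∃ p ∈ R, 0 < lam p := by
    by_contra hc; push_neg at hc
    exact absurd (Finset.sum_nonpos hc) (not_le.mpr hpos)
  have hgt : 0 < ∑ p ∈ R, lam p * (util (thetaBar R) u p.1 - util (thetaBar R) u p.2) := by
    refine Finset.sum_pos' (fun p hp => mul_nonneg (hnn p hp) (by linarith [hu p hp]))
      ⟨q, hq, mul_pos hqpos (by linarith [hu q hq])⟩
  linarith
end
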